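/- Let g > 0, h_l > 0, u_l > 0 be real numbers and define f(h) := h³ − h_l·h² − (h_l² + (2/g)·u_l²·h_l)·h + h_l³. Then f(0) = h_l³ > 0 and f(h_l) = −(2/g)·u_l²·h_l² < 0, and f has exactly three real roots r₁ < r₂ < r₃ satisfying r₁ < 0 < r₂ < h_l < r₃. -/
import Mathlib


/-- The cubic `f(h) = h³ − h_l h² − (h_l² + (2/g)u_l²h_l)h + h_l³`. -/
noncomputable def fCubic (g hl ul h : ℝ) : ℝ :=
  h ^ 3 - hl * h ^ 2 - (hl ^ 2 + (2 / g) * ul ^ 2 * hl) * h + hl ^ 3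

/-- `f(0) = h_l³ > 0`, `f(h_l) = −(2/g)u_l²h_l² < 0`, and `f` has exactly three
real roots `r₁ < 0 < r₂ < h_l < r₃`. -/
theorem stmt_15 (g hl ul : ℝ) (hg : 0 < g) (hhl : 0 < hl) (hul : 0 < ul) :
    (fCubic g hl ul 0 = hl ^ 3 ∧ 0 < hl ^ 3) ∧
    (fCubic g hl ul hl = -(2 / g) * ul ^ 2 * hl ^ 2 ∧ -(2 / g) * ul ^ 2 * hl ^ 2 < 0) ∧
    ∃ r₁ r₂ r₃ : ℝ, r₁ < 0 ∧ 0 < r₂ ∧ r₂ < hl ∧ hl < r₃ ∧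
      ∀ x : ℝ, fCubic g hl ul x = 0 ↔ (x = r₁ ∨ x = r₂ ∨ x = r₃) := by
  set c : ℝ := (2 / g) * ul ^ 2 * hl with hc
  have hcpos : 0 < c := by
    apply mul_pos (mul_pos (by positivity) (by positivity)) hhl
  have hf0 : fCubic g hl ul 0 = hl ^ 3 := by simp [fCubic]
  have hfhl : fCubic g hl ul hl = -(2 / g) * ul ^ 2 * hl ^ 2 := by
    simp only [fCubic]; ring
  have hfhlneg : -(2 / g) * ul ^ 2 * hl ^ 2 < 0 := by
    have : 0 < (2 / g) * ul ^ 2 * hl ^ 2 := by positivity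
    linarith
  refine ⟨⟨hf0, by positivity⟩, ⟨hfhl, hfhlneg⟩, ?_⟩
  set M : ℝ := hl + hl ^ 2 + c + 1 with hM
  have hM1 : 1 < M := by nlinarith
  have hMhl : hl < M := by nlinarith
  have hMpos : 0 < M := by linarith
  have cont : Continuous (fCubic g hl ul) := by
    unfold fCubic; fun_prop
  have hfnegM : fCubic g hl ul (-M) < 0 := by
    simp only [fCubic, hc]
    nlinarith [mul_pos hMpos hMpos, mul_pos (mul_pos hMpos hMpos) hMpos,
      mul_pos hhl (mul_pos hMpos hMpos), sq_nonneg (M - hl), mul_pos hMpos hcpos]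
  have hfM : 0 < fCubic g hl ul M := by
    simp only [fCubic, hc]
    nlinarith [mul_pos hMpos hMpos, mul_pos (mul_pos hMpos hMpos) hMpos,
      mul_pos hhl (mul_pos hMpos hMpos), sq_nonneg (M - hl), mul_pos hMpos hcpos]
  -- root r₁ in [-M, 0]
  have h1 : (0 : ℝ) ∈ Set.Icc (fCubic g hl ul (-M)) (fCubic g hl ul 0) :=
    ⟨by linarith, by rw [hf0]; positivity⟩
  obtain ⟨r₁, hr₁mem, hr₁⟩ := intermediate_value_Icc (by linarith : (-M : ℝ) ≤ 0)
    cont.continuousOn h1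
  -- root r₂ in [0, hl]
  have h2 : (0 : ℝ) ∈ Set.Icc (fCubic g hl ul hl) (fCubic g hl ul 0) :=
    ⟨by linarith, by rw [hf0]; positivity⟩
  obtain ⟨r₂, hr₂mem, hr₂⟩ := intermediate_value_Icc' (le_of_lt hhl) cont.continuousOn h2
  -- root r₃ in [hl, M]
  have h3 : (0 : ℝ) ∈ Set.Icc (fCubic g hl ul hl) (fCubic g hl ul M) := by
    constructor <;> linarith
  obtain ⟨r₃, hr₃mem, hr₃⟩ := intermediate_value_Icc (le_of_lt hMhl) cont.continuousOn h3
  have hf0ne : fCubic g hl ul 0 ≠ 0 := by rw [hf0]; positivity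
  have hfhlne : fCubic g hl ul hl ≠ 0 := by rw [hfhl]; linarith
  have hr₁0 : r₁ < 0 := lt_of_le_of_ne hr₁mem.2 (fun h => hf0ne (h ▸ hr₁))
  have hr₂0 : 0 < r₂ := lt_of_le_of_ne hr₂mem.1 (fun h => hf0ne (h.symm ▸ hr₂))
  have hr₂hl : r₂ < hl := lt_of_le_of_ne hr₂mem.2 (fun h => hfhlne (h ▸ hr₂))
  have hr₃hl : hl < r₃ := lt_of_le_of_ne hr₃mem.1 (fun h => hfhlne (h.symm ▸ hr₃))
  refine ⟨r₁, r₂, r₃, hr₁0, hr₂0, hr₂hl, hr₃hl, ?_⟩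
  have d12 : r₁ - r₂ ≠ 0 := by intro h; nlinarith [sub_eq_zero.mp h]
  have d13 : r₁ - r₃ ≠ 0 := by intro h; nlinarith [sub_eq_zero.mp h]
  have d23 : r₂ - r₃ ≠ 0 := by intro h; nlinarith [sub_eq_zero.mp h]
  have e1 := hr₁; have e2 := hr₂; have e3 := hr₃
  simp only [fCubic] at e1 e2 e3
  have key : ∀ x : ℝ, (r₁ - r₂) * (r₁ - r₃) * (r₂ - r₃) *
      (fCubic g hl ul x - (x - r₁) * (x - r₂) * (x - r₃)) = 0 := by
    intro x
    simp only [fCubic]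
    linear_combination ((r₂ - r₃) * (x - r₂) * (x - r₃)) * e1
      - ((r₁ - r₃) * (x - r₁) * (x - r₃)) * e2
      + ((r₁ - r₂) * (x - r₁) * (x - r₂)) * e3
  have fact : ∀ x : ℝ, fCubic g hl ul x = (x - r₁) * (x - r₂) * (x - r₃) := by
    intro x
    have := key x
    have hne : (r₁ - r₂) * (r₁ - r₃) * (r₂ - r₃) ≠ 0 := by
      exact mul_ne_zero (mul_ne_zero d12 d13) d23
    have := mul_eq_zero.mp this
    rcases this with h | h
    · exact absurd h hne
    · linarith [sub_eq_zero.mp h]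
  intro x
  rw [fact x]
  constructor
  · intro h
    rcases mul_eq_zero.mp h with h | h
    · rcases mul_eq_zero.mp h with h | h
      · exact Or.inl (sub_eq_zero.mp h)
      · exact Or.inr (Or.inl (sub_eq_zero.mp h))
    · exact Or.inr (Or.inr (sub_eq_zero.mp h))
  · rintro (rfl | rfl | rfl) <;> ring
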